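/- For the right B(Z_2)-modules i_k B(Z_2) (k = 0,1,2,3), the F_2-dimensions are: dim i_0 B(Z_2) = 13, dim i_1 B(Z_2) = 11, dim i_2 B(Z_2) = 5, dim i_3 B(Z_2) = 3, and these dimensions sum to 32 = dim B(Z_2). -/

import Mathlib

open FreeAlgebra

/-- Generators of the path algebra `B(Z_2)`: four vertex idempotents and seven arrows. -/
inductive Gen2 : Type
  | e : Fin 4 → Gen2
  | r : Fin 7 → Gen2

/-- Sources of the arrows ρ₁,…,ρ₇. -/
def src2 : Fin 7 → Fin 4 := ![0, 1, 0, 1, 2, 3, 2]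

/-- Targets of the arrows ρ₁,…,ρ₇. -/
def tgt2 : Fin 7 → Fin 4 := ![1, 0, 1, 2, 3, 2, 3]

/-- Relations presenting `B(Z_2)` as a quotient of the free algebra: the path-algebra
relations for the quiver together with ρ₁ρ₄ = ρ₄ρ₇ = ρ₂ρ₁ = ρ₃ρ₂ = ρ₆ρ₅ = ρ₇ρ₆ = 0. -/
inductive Rel2 : FreeAlgebra (ZMod 2) Gen2 → FreeAlgebra (ZMod 2) Gen2 → Prop
  | idem (k : Fin 4) :
      Rel2 (ι (ZMod 2) (Gen2.e k) * ι (ZMod 2) (Gen2.e k)) (ι (ZMod 2) (Gen2.e k))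
  | orth (k l : Fin 4) (h : k ≠ l) : Rel2 (ι (ZMod 2) (Gen2.e k) * ι (ZMod 2) (Gen2.e l)) 0
  | sum : Rel2 (∑ k : Fin 4, ι (ZMod 2) (Gen2.e k)) 1
  | source (m : Fin 7) :
      Rel2 (ι (ZMod 2) (Gen2.e (src2 m)) * ι (ZMod 2) (Gen2.r m)) (ι (ZMod 2) (Gen2.r m))
  | target (m : Fin 7) :
      Rel2 (ι (ZMod 2) (Gen2.r m) * ι (ZMod 2) (Gen2.e (tgt2 m))) (ι (ZMod 2) (Gen2.r m))
  | rel14 : Rel2 (ι (ZMod 2) (Gen2.r 0) * ι (ZMod 2) (Gen2.r 3)) 0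
  | rel47 : Rel2 (ι (ZMod 2) (Gen2.r 3) * ι (ZMod 2) (Gen2.r 6)) 0
  | rel21 : Rel2 (ι (ZMod 2) (Gen2.r 1) * ι (ZMod 2) (Gen2.r 0)) 0
  | rel32 : Rel2 (ι (ZMod 2) (Gen2.r 2) * ι (ZMod 2) (Gen2.r 1)) 0
  | rel65 : Rel2 (ι (ZMod 2) (Gen2.r 5) * ι (ZMod 2) (Gen2.r 4)) 0
  | rel76 : Rel2 (ι (ZMod 2) (Gen2.r 6) * ι (ZMod 2) (Gen2.r 5)) 0

/-- The genus-2 bordered algebra `B(Z_2)`. -/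
abbrev B2 : Type := RingQuot Rel2

/-- The idempotents i₀, i₁, i₂, i₃ in `B(Z_2)`. -/
noncomputable def idem2 (k : Fin 4) : B2 :=
  RingQuot.mkAlgHom (ZMod 2) Rel2 (ι (ZMod 2) (Gen2.e k))

/-- The arrows ρ₁,…,ρ₇ in `B(Z_2)` (indexed by `Fin 7`). -/
noncomputable def arr2 (m : Fin 7) : B2 :=
  RingQuot.mkAlgHom (ZMod 2) Rel2 (ι (ZMod 2) (Gen2.r m))

/-- The arrow ρ_k in `B(Z_2)`, using 1-based indexing; `0` for out-of-range indices. -/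
noncomputable def ρ2 (k : ℕ) : B2 :=
  if h : 1 ≤ k ∧ k ≤ 7 then arr2 ⟨k - 1, by omega⟩ else 0

/-- The chord ρ_{[i,j]} = ρ_i ρ_{i+1} ⋯ ρ_j in `B(Z_2)` (1-based indices). -/
noncomputable def chord2 (i j : ℕ) : B2 :=
  ((List.range' i (j + 1 - i)).map ρ2).prod


/-- The F_2-subspace i_k · B(Z_2) of B(Z_2), i.e. the right module generated by i_k. -/
noncomputable def rightMod2 (k : Fin 4) : Submodule (ZMod 2) B2 :=
  LinearMap.range (LinearMap.mulLeft (ZMod 2) (idem2 k))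

/-!
Among the products of two arrows, all but the consecutive ones ρ_m ρ_{m+1} are killed, either
by the quiver or by the six relations. Hence `B(Z_2)` is spanned by the four idempotents and
the 28 chords ρ_{[i,j]}, 1 ≤ i ≤ j ≤ 7. These 32 elements are linearly independent since they
act by linearly independent matrices in the left regular representation of the combinatorial
path monoid. Each i_k fixes or kills each of them, so i_k B(Z_2) is spanned by the paths
starting at i_k: 13, 11, 5 and 3 of them.
-/

open Module

section LeftRegular

variable {R P : Type*} [Semiring R] [Fintype P] [DecidableEq P]

/-- `none` stands for a zero product. -/
def leftRegMatrix (mul : P → P → Option P) (p : P) : Matrix P P R :=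
  fun q r => if mul p r = some q then 1 else 0

theorem leftRegMatrix_mul {mul : P → P → Option P}
    (assoc : ∀ p q r, (mul p q).bind (mul · r) = (mul q r).bind (mul p ·)) (p q : P) :
    leftRegMatrix mul p * leftRegMatrix mul q =
      ((mul p q).elim 0 (leftRegMatrix mul) : Matrix P P R) := by
  ext a b
  have hassoc := assoc p q b
  rw [Matrix.mul_apply]
  rcases hqb : mul q b with _ | c <;> rcases hpq : mul p q with _ | s <;>
    simp only [hqb, hpq, Option.bind] at hassoc
  · simp [leftRegMatrix, hqb]
  · simp [leftRegMatrix, hqb, hassoc]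
  all_goals
    rw [Fintype.sum_eq_single c fun d hd => by simp [leftRegMatrix, hqb, Ne.symm hd]]
    simp [leftRegMatrix, hqb, ← hassoc]

end LeftRegular

theorem Submodule.eq_top_of_one_mem_of_mul_mem {R A : Type*} [CommSemiring R] [Semiring A]
    [Algebra R A] {s : Set A} (hs : Algebra.adjoin R s = ⊤) {M : Submodule R A}
    (one_mem : 1 ∈ M) (mul_mem : ∀ x ∈ s, ∀ y ∈ M, x * y ∈ M) : M = ⊤ := by
  suffices h : ∀ a ∈ Algebra.adjoin R s, ∀ y ∈ M, a * y ∈ M from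
    eq_top_iff.2 fun a _ => mul_one a ▸ h a (hs ▸ Algebra.mem_top) 1 one_mem
  intro a ha
  induction ha using Algebra.adjoin_induction with
  | mem x hx => exact mul_mem x hx
  | algebraMap r =>
    exact fun y hy => by simpa [Algebra.algebraMap_eq_smul_one] using M.smul_mem r hy
  | add x y _ _ hx hy => exact fun z hz => (add_mul x y z) ▸ M.add_mem (hx z hz) (hy z hz)
  | mul x y _ _ hx hy => exact fun z hz => (mul_assoc x y z) ▸ hx _ (hy z hz)

theorem LinearMap.range_eq_span_image_of_basis {R M ι : Type*} [Semiring R] [AddCommMonoid M]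
    [Module R M] (b : Basis ι R M) (f : M →ₗ[R] M) (s : Set ι) [DecidablePred (· ∈ s)]
    (hf : ∀ i, f (b i) = if i ∈ s then b i else 0) : range f = Submodule.span R (b '' s) := by
  refine le_antisymm ?_ (Submodule.span_le.2 ?_)
  · rw [range_eq_map, ← b.span_eq, Submodule.map_span_le]
    rintro _ ⟨i, rfl⟩
    rw [hf]
    split_ifs with hi
    · exact Submodule.subset_span ⟨i, hi, rfl⟩
    · exact Submodule.zero_mem _
  · rintro _ ⟨i, hi, rfl⟩
    exact ⟨b i, by rw [hf, if_pos hi]⟩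

theorem LinearMap.finrank_range_of_basis {R M ι : Type*} [DivisionRing R] [AddCommGroup M]
    [Module R M] (b : Basis ι R M) (f : M →ₗ[R] M) (s : Set ι) [DecidablePred (· ∈ s)]
    [Fintype s] (hf : ∀ i, f (b i) = if i ∈ s then b i else 0) :
    finrank R (range f) = Fintype.card s := by
  rw [f.range_eq_span_image_of_basis b s hf, Set.image_eq_range]
  exact finrank_span_eq_card (b.linearIndependent.comp _ Subtype.val_injective)

theorem idem2_mul_idem2 (k l : Fin 4) : idem2 k * idem2 l = if k = l then idem2 k else 0 := by
  split_ifs with h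
  · subst h; rw [idem2, ← map_mul]; exact RingQuot.mkAlgHom_rel (ZMod 2) (Rel2.idem k)
  · rw [idem2, idem2, ← map_mul, RingQuot.mkAlgHom_rel (ZMod 2) (Rel2.orth k l h), map_zero]

theorem sum_idem2 : ∑ k, idem2 k = 1 := by
  simp only [idem2, ← map_sum]
  rw [RingQuot.mkAlgHom_rel (ZMod 2) Rel2.sum, map_one]

theorem idem2_src2_mul_arr2 (m : Fin 7) : idem2 (src2 m) * arr2 m = arr2 m := by
  rw [idem2, arr2, ← map_mul]; exact RingQuot.mkAlgHom_rel (ZMod 2) (Rel2.source m)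

theorem arr2_mul_idem2_tgt2 (m : Fin 7) : arr2 m * idem2 (tgt2 m) = arr2 m := by
  rw [idem2, arr2, ← map_mul]; exact RingQuot.mkAlgHom_rel (ZMod 2) (Rel2.target m)

theorem idem2_mul_arr2 (k : Fin 4) (m : Fin 7) :
    idem2 k * arr2 m = if src2 m = k then arr2 m else 0 := by
  split_ifs with h
  · exact h ▸ idem2_src2_mul_arr2 m
  · rw [← idem2_src2_mul_arr2, ← mul_assoc, idem2_mul_idem2, if_neg (Ne.symm h), zero_mul]

theorem arr2_mul_idem2 (m : Fin 7) (k : Fin 4) :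
    arr2 m * idem2 k = if tgt2 m = k then arr2 m else 0 := by
  split_ifs with h
  · exact h ▸ arr2_mul_idem2_tgt2 m
  · rw [← arr2_mul_idem2_tgt2, mul_assoc, idem2_mul_idem2, if_neg h, mul_zero]

theorem arr2_mul_arr2_of_tgt2_ne_src2 {a b : Fin 7} (h : tgt2 a ≠ src2 b) :
    arr2 a * arr2 b = 0 := by
  rw [← arr2_mul_idem2_tgt2 a, mul_assoc, idem2_mul_arr2, if_neg (Ne.symm h), mul_zero]

theorem arr2_mul_arr2_of_ne {a b : Fin 7} (h : (b : ℕ) ≠ a + 1) : arr2 a * arr2 b = 0 := by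
  have of_rel (r : Rel2 (ι (ZMod 2) (Gen2.r a) * ι (ZMod 2) (Gen2.r b)) 0) :
      arr2 a * arr2 b = 0 := by
    rw [arr2, arr2, ← map_mul, RingQuot.mkAlgHom_rel (ZMod 2) r, map_zero]
  fin_cases a <;> fin_cases b <;> first
    | exact absurd rfl h
    | exact arr2_mul_arr2_of_tgt2_ne_src2 (by decide)
    | exact of_rel (by constructor)

theorem chord2_of_lt {i j : ℕ} (h : j < i) : chord2 i j = 1 := by
  rw [chord2, Nat.sub_eq_zero_of_le h, List.range'_zero, List.map_nil, List.prod_nil]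

theorem chord2_of_le {i j : ℕ} (h : i ≤ j) : chord2 i j = ρ2 i * chord2 (i + 1) j := by
  rw [chord2, chord2, show j + 1 - i = j + 1 - (i + 1) + 1 by omega, List.range'_succ,
    List.map_cons, List.prod_cons]

theorem ρ2_succ (m : Fin 7) : ρ2 (m + 1) = arr2 m := by
  rw [ρ2, dif_pos (by omega)]
  rfl

/-- Paths of `B(Z_2)`: `inl k` is the idempotent `i_k`, and `inr ⟨(i, j), _⟩` is the chord
ρ_{[i+1, j+1]} (arrows are `0`-indexed, as in `arr2`). -/
abbrev B2Path : Type := Fin 4 ⊕ {s : Fin 7 × Fin 7 // s.1 ≤ s.2}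

namespace B2Path

def arrow (m : Fin 7) : B2Path := .inr ⟨(m, m), le_rfl⟩

def ofGen : Gen2 → B2Path
  | .e k => .inl k
  | .r m => arrow m

def source : B2Path → Fin 4
  | .inl k => k
  | .inr s => src2 s.1.1

def concat : B2Path → B2Path → Option B2Path
  | .inl k, .inl l => if k = l then some (.inl k) else none
  | .inl k, .inr s => if src2 s.1.1 = k then some (.inr s) else none
  | .inr s, .inl k => if tgt2 s.1.2 = k then some (.inr s) else none
  | .inr s, .inr t =>
      if h : (t.1.1 : ℕ) = s.1.2 + 1 then
        some (.inr ⟨(s.1.1, t.1.2), by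
          have := s.2; have := t.2; simp only [Fin.le_iff_val_le_val] at *; omega⟩)
      else none

theorem concat_assoc (p q r : B2Path) :
    (concat p q).bind (concat · r) = (concat q r).bind (concat p ·) := by
  revert p q r; decide

abbrev mat (p : B2Path) : Matrix B2Path B2Path (ZMod 2) := leftRegMatrix concat p

theorem mat_mul (p q : B2Path) : mat p * mat q = (concat p q).elim 0 mat :=
  leftRegMatrix_mul concat_assoc p q

theorem sum_mat_inl : ∑ k, mat (.inl k) = 1 := by
  ext a b
  rw [Matrix.sum_apply]
  rcases b with l | s
  · rw [Fintype.sum_eq_single l fun k hk => by simp [leftRegMatrix, concat, hk]]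
    by_cases h : a = .inl l <;> simp [leftRegMatrix, concat, Matrix.one_apply, h, eq_comm]
  · rw [Fintype.sum_eq_single (src2 s.1.1) fun k hk => by
      simp [leftRegMatrix, concat, Ne.symm hk]]
    by_cases h : a = .inr s <;> simp [leftRegMatrix, concat, Matrix.one_apply, h, eq_comm]

theorem lift_mat_ofGen_rel ⦃x y : FreeAlgebra (ZMod 2) Gen2⦄ (h : Rel2 x y) :
    lift (ZMod 2) (mat ∘ ofGen) x = lift (ZMod 2) (mat ∘ ofGen) y := by
  cases h with
  | sum =>
    simpa only [map_sum, map_one, lift_ι_apply, Function.comp_apply, ofGen] using sum_mat_inl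
  | orth k l h => simp [ofGen, mat_mul, concat, h]
  | _ => simp [ofGen, mat_mul, concat, arrow]

/-- Every path has exactly one idempotent on its right, so `mat p` sends this vector to the
basis vector at `p`. -/
def idempotentIndicator : B2Path → ZMod 2 := Sum.elim 1 0

set_option maxRecDepth 100000 in
theorem mat_mulVec_idempotentIndicator (p : B2Path) :
    (mat p).mulVec idempotentIndicator = Pi.single p 1 := by
  revert p; decide

noncomputable def toB2 : B2Path → B2
  | .inl k => idem2 k
  | .inr s => chord2 (s.1.1 + 1) (s.1.2 + 1)

theorem toB2_arrow (m : Fin 7) : (arrow m).toB2 = arr2 m := by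
  rw [arrow, toB2, chord2_of_le le_rfl, chord2_of_lt (Nat.lt_succ_self _), mul_one, ρ2_succ]

theorem toB2_inr (s : {s : Fin 7 × Fin 7 // s.1 ≤ s.2}) :
    toB2 (.inr s) = arr2 s.1.1 * chord2 (s.1.1 + 2) (s.1.2 + 1) := by
  have : (s.1.1 : ℕ) ≤ s.1.2 := s.2
  rw [toB2, chord2_of_le (by omega), ρ2_succ]

theorem idem2_mul_toB2 (k : Fin 4) (q : B2Path) :
    idem2 k * q.toB2 = (concat (.inl k) q).elim 0 toB2 := by
  rcases q with l | s
  · rw [toB2, idem2_mul_idem2]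
    split_ifs with h <;> simp [concat, toB2, h]
  · rw [toB2_inr, ← mul_assoc, idem2_mul_arr2]
    split_ifs with h <;> simp [concat, h, toB2_inr]

theorem arr2_mul_toB2 (m : Fin 7) (q : B2Path) :
    arr2 m * q.toB2 = (concat (arrow m) q).elim 0 toB2 := by
  rcases q with l | s
  · rw [toB2, arr2_mul_idem2]
    split_ifs with h
    · simp [concat, arrow, h, toB2, chord2_of_le, chord2_of_lt, ρ2_succ]
    · simp [concat, arrow, h]
  · by_cases h : (s.1.1 : ℕ) = m + 1
    · simp only [concat, arrow, h, dite_true, Option.elim, toB2]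
      have : (s.1.1 : ℕ) ≤ s.1.2 := s.2
      rw [← ρ2_succ, ← chord2_of_le (by omega)]
    · rw [toB2_inr, ← mul_assoc, arr2_mul_arr2_of_ne h, zero_mul]
      simp [concat, arrow, h]

theorem mkAlgHom_ι_mul_toB2 (g : Gen2) (q : B2Path) :
    RingQuot.mkAlgHom (ZMod 2) Rel2 (ι (ZMod 2) g) * q.toB2 =
      (concat (ofGen g) q).elim 0 toB2 := by
  cases g with
  | e k => exact idem2_mul_toB2 k q
  | r m => exact arr2_mul_toB2 m q

end B2Path

open B2Path

noncomputable def regRep : B2 →ₐ[ZMod 2] Matrix B2Path B2Path (ZMod 2) :=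
  RingQuot.liftAlgHom (ZMod 2) ⟨lift (ZMod 2) (mat ∘ ofGen), lift_mat_ofGen_rel⟩

theorem regRep_idem2 (k : Fin 4) : regRep (idem2 k) = mat (.inl k) := by
  rw [regRep, idem2, RingQuot.liftAlgHom_mkAlgHom_apply, lift_ι_apply, Function.comp_apply,
    ofGen]

theorem regRep_arr2 (m : Fin 7) : regRep (arr2 m) = mat (arrow m) := by
  rw [regRep, arr2, RingQuot.liftAlgHom_mkAlgHom_apply, lift_ι_apply, Function.comp_apply,
    ofGen]

theorem regRep_toB2_inr (i j : Fin 7) (hij : i ≤ j) :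
    regRep (toB2 (.inr ⟨(i, j), hij⟩)) = mat (.inr ⟨(i, j), hij⟩) := by
  obtain rfl | hlt := hij.eq_or_lt
  · exact (congrArg regRep (toB2_arrow i)).trans (regRep_arr2 i)
  · have hlt' : (i : ℕ) < j := hlt
    have hsucc : (⟨i + 1, by omega⟩ : Fin 7) ≤ j := Fin.le_iff_val_le_val.2 hlt'
    have hconcat : concat (arrow i) (.inr ⟨(⟨i + 1, by omega⟩, j), hsucc⟩) =
        some (.inr ⟨(i, j), hij⟩) := by
      simp [concat, arrow]
    have hprod := arr2_mul_toB2 i (.inr ⟨(⟨i + 1, by omega⟩, j), hsucc⟩)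
    rw [hconcat, Option.elim_some] at hprod
    rw [← hprod, map_mul, regRep_arr2, regRep_toB2_inr, mat_mul, hconcat, Option.elim_some]
termination_by (j : ℕ) - i

theorem regRep_toB2 (p : B2Path) : regRep p.toB2 = mat p := by
  rcases p with k | ⟨⟨i, j⟩, hij⟩
  · exact regRep_idem2 k
  · exact regRep_toB2_inr i j hij

theorem adjoin_range_mkAlgHom_ι :
    Algebra.adjoin (ZMod 2) (Set.range fun g => RingQuot.mkAlgHom (ZMod 2) Rel2 (ι (ZMod 2) g))
      = ⊤ := by
  rw [Set.range_comp', Algebra.adjoin_image, FreeAlgebra.adjoin_range_ι, Algebra.map_top,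
    AlgHom.range_eq_top]
  exact RingQuot.mkAlgHom_surjective _ _

namespace B2Path

theorem linearIndependent_toB2 : LinearIndependent (ZMod 2) toB2 := by
  let evalIdempotents : B2 →ₗ[ZMod 2] B2Path → ZMod 2 :=
    ((Matrix.mulVec.addMonoidHomLeft idempotentIndicator).toZModLinearMap 2).comp
      regRep.toLinearMap
  refine .of_comp evalIdempotents ?_
  convert (Pi.basisFun (ZMod 2) B2Path).linearIndependent using 1
  ext p : 1
  simp only [evalIdempotents, LinearMap.coe_comp, AddMonoidHom.coe_toZModLinearMap,
    AlgHom.coe_toLinearMap, Function.comp_apply, regRep_toB2, Pi.basisFun_apply]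
  exact mat_mulVec_idempotentIndicator p

theorem span_range_toB2 : Submodule.span (ZMod 2) (Set.range toB2) = ⊤ := by
  refine Submodule.eq_top_of_one_mem_of_mul_mem adjoin_range_mkAlgHom_ι ?_ ?_
  · rw [← sum_idem2]
    exact Submodule.sum_mem _ fun k _ => Submodule.subset_span ⟨.inl k, rfl⟩
  · rintro _ ⟨g, rfl⟩ y hy
    induction hy using Submodule.span_induction with
    | mem _ hq =>
      obtain ⟨q, rfl⟩ := hq
      rw [mkAlgHom_ι_mul_toB2]
      rcases concat (ofGen g) q with _ | r
      · exact Submodule.zero_mem _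
      · exact Submodule.subset_span ⟨r, rfl⟩
    | zero => rw [mul_zero]; exact Submodule.zero_mem _
    | add a b _ _ ha hb => rw [mul_add]; exact Submodule.add_mem _ ha hb
    | smul c a _ ha => rw [mul_smul_comm]; exact Submodule.smul_mem _ _ ha

noncomputable def basis : Basis B2Path (ZMod 2) B2 :=
  .mk linearIndependent_toB2 span_range_toB2.ge

end B2Path

theorem finrank_rightMod2 (k : Fin 4) :
    finrank (ZMod 2) (rightMod2 k) = Fintype.card {p : B2Path | p.source = k} := by
  refine LinearMap.finrank_range_of_basis B2Path.basis _ _ fun p => ?_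
  rw [B2Path.basis, Basis.mk_apply, LinearMap.mulLeft_apply, idem2_mul_toB2]
  rcases p with l | s <;> simp only [concat, source, Set.mem_ofPred_eq, eq_comm] <;>
    split_ifs <;> simp_all

/-- dim i_0 B = 13, dim i_1 B = 11, dim i_2 B = 5, dim i_3 B = 3,
summing to 32 = dim B(Z_2). -/
theorem stmt_8 :
    Module.finrank (ZMod 2) (rightMod2 0) = 13 ∧
    Module.finrank (ZMod 2) (rightMod2 1) = 11 ∧
    Module.finrank (ZMod 2) (rightMod2 2) = 5 ∧
    Module.finrank (ZMod 2) (rightMod2 3) = 3 ∧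
    Module.finrank (ZMod 2) (rightMod2 0) + Module.finrank (ZMod 2) (rightMod2 1) +
      Module.finrank (ZMod 2) (rightMod2 2) + Module.finrank (ZMod 2) (rightMod2 3) = 32 ∧
    Module.finrank (ZMod 2) B2 = 32 := by
  simp only [finrank_rightMod2, finrank_eq_card_basis B2Path.basis]
  decide
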